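/- In a green Veldkamp quadrangle, any two opposite points are at distance exactly 4. -/

import Mathlib

/-- A Veldkamp graph: a graph endowed, at each vertex `v`, with a symmetric
anti-reflexive "local opposition" relation `opp v` on the neighborhood of `v`
that is 2-plump. -/
structure VeldkampGraph (V : Type*) where
  adj : V → V → Prop
  adj_symm : ∀ u v, adj u v → adj v u
  adj_irrefl : ∀ v, ¬ adj v v
  opp : V → V → V → Prop
  opp_adj_left : ∀ v x y, opp v x y → adj v x
  opp_adj_right : ∀ v x y, opp v x y → adj v y
  opp_symm : ∀ v x y, opp v x y → opp v y x
  opp_irrefl : ∀ v x, ¬ opp v x x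
  plump2 : ∀ v x y, adj v x → adj v y → ∃ z, adj v z ∧ opp v z x ∧ opp v z y

namespace VeldkampGraph

variable {V : Type*} (Γ : VeldkampGraph V)

/-- `p 0, p 1, ..., p s` is an `s`-path. -/
def IsPath (s : ℕ) (p : ℕ → V) : Prop :=
  (∀ i, i < s → Γ.adj (p i) (p (i + 1))) ∧ ∀ i, i + 2 ≤ s → p i ≠ p (i + 2)

/-- `p 0, ..., p s` is a straight `s`-path. -/
def IsStraight (s : ℕ) (p : ℕ → V) : Prop :=
  Γ.IsPath s p ∧ ∀ i, i + 2 ≤ s → Γ.opp (p (i + 1)) (p i) (p (i + 2))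

/-- There is an `s`-path from `x` to `y`. -/
def HasPathLen (s : ℕ) (x y : V) : Prop :=
  ∃ p : ℕ → V, Γ.IsPath s p ∧ p 0 = x ∧ p s = y

/-- `dist (x, y) = k`. -/
def DistEq (x y : V) (k : ℕ) : Prop :=
  Γ.HasPathLen k x y ∧ ∀ j < k, ¬ Γ.HasPathLen j x y

def Connected : Prop := ∀ x y : V, ∃ s, Γ.HasPathLen s x y

def Bipartite : Prop := ∃ P : Set V, ∀ u v, Γ.adj u v → (u ∈ P ↔ v ∉ P)

/-- A straight `m`-circuit, encoded as an `m`-periodic straight closed walk. -/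
def IsClosedStraight (m : ℕ) (q : ℕ → V) : Prop :=
  (∀ i, Γ.adj (q i) (q (i + 1))) ∧ (∀ i, Γ.opp (q (i + 1)) (q i) (q (i + 2))) ∧
    ∀ i, q (i + m) = q i

/-- An `m`-circuit: an `m`-periodic closed walk through `m` distinct vertices. -/
def IsCircuit (m : ℕ) (q : ℕ → V) : Prop :=
  (∀ i, Γ.adj (q i) (q (i + 1))) ∧ (∀ i, q (i + m) = q i) ∧
    ∀ i j, i < m → j < m → q i = q j → i = j

end VeldkampGraph

/-- A Veldkamp `n`-gon. -/
structure VeldkampNGon (V : Type*) (n : ℕ) extends VeldkampGraph V where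
  two_le : 2 ≤ n
  connected : toVeldkampGraph.Connected
  bipartite : toVeldkampGraph.Bipartite
  vp2 : ∀ k, 1 ≤ k → k ≤ n - 1 → ∀ p j q, toVeldkampGraph.IsStraight k p →
    j ≤ k → toVeldkampGraph.IsStraight j q → q 0 = p 0 → q j = p k →
    j = k ∧ ∀ i ≤ k, q i = p i
  vp3 : ∀ p, toVeldkampGraph.IsStraight (n + 1) p →
    ∃ q, toVeldkampGraph.IsClosedStraight (2 * n) q ∧ ∀ i ≤ n + 1, q i = p i

namespace VeldkampNGon

variable {V : Type*} {n : ℕ} (Γ : VeldkampNGon V n)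

/-- Two vertices are opposite if there is a root (straight `n`-path) from one
to the other. -/
def Opp (x y : V) : Prop :=
  ∃ p, Γ.IsStraight n p ∧ p 0 = x ∧ p n = y

/-- The set of vertices opposite `x`. -/
def opSet (x : V) : Set V := {y | Γ.Opp x y}

/-- Two edges are opposite if some straight `(n+1)`-path has them as its first
and last edges. -/
def EdgeOpp (e f : Sym2 V) : Prop :=
  ∃ p, Γ.IsStraight (n + 1) p ∧ s(p 0, p 1) = e ∧ s(p n, p (n + 1)) = f

end VeldkampNGon

/-- A green Veldkamp quadrangle: a Veldkamp 4-gon with a bipartition into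
points `Pt` and lines (the complement), whose local opposition relations at
lines are trivial. -/
structure GreenVQ (V : Type*) extends VeldkampNGon V 4 where
  Pt : Set V
  part : ∀ u v, adj u v → (u ∈ Pt ↔ v ∉ Pt)
  green : ∀ x, x ∉ Pt → ∀ a b, adj x a → adj x b → a ≠ b → opp x a b

namespace GreenVQ

variable {V : Type*} (Γ : GreenVQ V)

/-- A weed: a non-straight 4-path `(a,x,b,y,c)` with `a,b,c` points and
`dist (a, c) = 4`. -/
def IsWeed (p : ℕ → V) : Prop :=
  Γ.IsPath 4 p ∧ ¬ Γ.IsStraight 4 p ∧ p 0 ∈ Γ.Pt ∧ p 2 ∈ Γ.Pt ∧ p 4 ∈ Γ.Pt ∧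
    Γ.DistEq (p 0) (p 4) 4

/-- `a ≃ b` for points: `a = b` or some weed begins at `a` and ends at `b`. -/
def PtSim (a b : V) : Prop :=
  a = b ∨ ∃ p, Γ.IsWeed p ∧ p 0 = a ∧ p 4 = b

/-- `x ~ y` for lines: some weed contains both `x` and `y`. -/
def LnSim (x y : V) : Prop :=
  ∃ p, Γ.IsWeed p ∧ ((p 1 = x ∧ p 3 = y) ∨ (p 1 = y ∧ p 3 = x))

/-- Flat: no two vertices have the same set of opposite vertices. -/
def Flat : Prop := ∀ x y : V, Γ.opSet x = Γ.opSet y → x = y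

end GreenVQ

/-!
A root from `a` to `b` has `a ≠ b` (else its first `n - 1` steps and the edge back from `b`
would be two straight paths of different lengths between the same ends), and a path of odd
length joins a point to a line. If `a, x, b` is a path, the line `x` makes it straight by
greenness. But a straight path `v` from `a` to `b` of length `m ≤ n - 2` is incompatible with a
root `p` from `a` to `b`: choose `z` at `b` opposite both `v (m - 1)` and `p (n - 1)`, close
`p, z` to a straight `2n`-circuit, and compare its other arc from `a` to `z` (of length `n - 1`)
with `v, z`. Uniqueness of short straight paths makes them equal, so `b` occurs twice on the
circuit two steps apart, which straightness forbids.
-/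

namespace VeldkampGraph

variable {V : Type*} {Γ : VeldkampGraph V}

theorem IsStraight.congr {s : ℕ} {p q : ℕ → V} (hp : Γ.IsStraight s p)
    (hpq : ∀ i ≤ s, p i = q i) : Γ.IsStraight s q := by
  refine ⟨⟨fun i hi => ?_, fun i hi => ?_⟩, fun i hi => ?_⟩
  · rw [← hpq i (by omega), ← hpq (i + 1) hi]; exact hp.1.1 i hi
  · rw [← hpq i (by omega), ← hpq (i + 2) hi]; exact hp.1.2 i hi
  · rw [← hpq i (by omega), ← hpq (i + 1) (by omega), ← hpq (i + 2) hi]; exact hp.2 i hi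

theorem IsStraight.mono {s t : ℕ} {p : ℕ → V} (hp : Γ.IsStraight s p) (hts : t ≤ s) :
    Γ.IsStraight t p :=
  ⟨⟨fun i hi => hp.1.1 i (by omega), fun i hi => hp.1.2 i (by omega)⟩,
    fun i hi => hp.2 i (by omega)⟩

theorem IsStraight.succ {s : ℕ} {p : ℕ → V} (hp : Γ.IsStraight (s + 1) p)
    (hadj : Γ.adj (p (s + 1)) (p (s + 2))) (hopp : Γ.opp (p (s + 1)) (p s) (p (s + 2))) :
    Γ.IsStraight (s + 2) p := by
  refine ⟨⟨fun i hi => ?_, fun i hi => ?_⟩, fun i hi => ?_⟩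
  · rcases Nat.lt_succ_iff_lt_or_eq.1 hi with hi | rfl
    exacts [hp.1.1 i hi, hadj]
  · rcases Nat.lt_or_ge i s with hi | hi
    · exact hp.1.2 i (by omega)
    · obtain rfl : i = s := by omega
      exact fun h => Γ.opp_irrefl _ _ (h ▸ hopp)
  · rcases Nat.lt_or_ge i s with hi | hi
    · exact hp.2 i (by omega)
    · obtain rfl : i = s := by omega
      exact hopp

theorem IsStraight.extend {s : ℕ} {p : ℕ → V} {z : V} (hp : Γ.IsStraight (s + 1) p)
    (hadj : Γ.adj (p (s + 1)) z) (hopp : Γ.opp (p (s + 1)) (p s) z) :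
    ∃ q, Γ.IsStraight (s + 2) q ∧ (∀ i ≤ s + 1, q i = p i) ∧ q (s + 2) = z := by
  classical
  have hq : ∀ i ≤ s + 1, Function.update p (s + 2) z i = p i :=
    fun i hi => Function.update_of_ne (by omega) _ _
  refine ⟨_, IsStraight.succ (hp.congr fun i hi => (hq i hi).symm) ?_ ?_, hq,
    Function.update_self _ _ _⟩ <;>
  simpa only [hq s (by omega), hq (s + 1) le_rfl, Function.update_self]

theorem IsStraight.reverse {s : ℕ} {p : ℕ → V} (hp : Γ.IsStraight s p) :
    Γ.IsStraight s (fun i => p (s - i)) := by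
  refine ⟨⟨fun i hi => ?_, fun i hi => ?_⟩, fun i hi => ?_⟩
  · have e : s - i = s - (i + 1) + 1 := by omega
    simpa only [e] using Γ.adj_symm _ _ (hp.1.1 (s - (i + 1)) (by omega))
  · have e : s - i = s - (i + 2) + 2 := by omega
    simpa only [e] using (hp.1.2 (s - (i + 2)) (by omega)).symm
  · have e₁ : s - i = s - (i + 2) + 2 := by omega
    have e₂ : s - (i + 1) = s - (i + 2) + 1 := by omega
    simpa only [e₁, e₂] using Γ.opp_symm _ _ _ (hp.2 (s - (i + 2)) (by omega))

theorem IsClosedStraight.ne_add_two {m : ℕ} {q : ℕ → V} (hq : Γ.IsClosedStraight m q)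
    (i : ℕ) : q i ≠ q (i + 2) :=
  fun h => Γ.opp_irrefl _ _ (h ▸ hq.2.1 i)

theorem IsClosedStraight.isStraight_shift {m : ℕ} {q : ℕ → V} (hq : Γ.IsClosedStraight m q)
    (k s : ℕ) : Γ.IsStraight s (fun i => q (k + i)) :=
  ⟨⟨fun i _ => hq.1 (k + i), fun i _ => hq.ne_add_two (k + i)⟩, fun i _ => hq.2.1 (k + i)⟩

end VeldkampGraph

namespace VeldkampNGon

variable {V : Type*} {n : ℕ} {Γ : VeldkampNGon V n}

theorem Opp.ne {a b : V} (h : Γ.Opp a b) : a ≠ b := by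
  rintro rfl
  obtain ⟨p, hp, hp0, hpn⟩ := h
  have hn := Γ.two_le
  obtain ⟨hn2, -⟩ := Γ.vp2 (n - 1) (by omega) le_rfl p 1 _ (hp.mono (by omega)) (by omega)
    (hp.reverse.mono (by omega)) (by simp [hpn, hp0]) rfl
  exact hp.1.2 0 (by omega) (by rw [hp0, show 0 + 2 = n by omega, hpn])

theorem Opp.not_isStraight {a b : V} (h : Γ.Opp a b) {m : ℕ} {v : ℕ → V}
    (hv : Γ.IsStraight m v) (hv0 : v 0 = a) (hvm : v m = b) (hm : 1 ≤ m) (hmn : m + 2 ≤ n) :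
    False := by
  obtain ⟨s, rfl⟩ : ∃ s, m = s + 1 := ⟨m - 1, by omega⟩
  obtain ⟨t, rfl⟩ : ∃ t, n = t + 1 := ⟨n - 1, by omega⟩
  obtain ⟨p, hp, rfl, rfl⟩ := h
  have hvb : Γ.adj (v s) (p (t + 1)) := hvm ▸ hv.1.1 s (by omega)
  obtain ⟨z, hbz, hzv, hzp⟩ := Γ.plump2 _ _ _ (Γ.adj_symm _ _ hvb)
    (Γ.adj_symm _ _ (hp.1.1 t (by omega)))
  obtain ⟨w, hw, hwp, hwz⟩ := hp.extend hbz (Γ.opp_symm _ _ _ hzp)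
  obtain ⟨Q, hQ, hQw⟩ := Γ.vp3 w hw
  obtain ⟨v', hv', hv'v, hv'z⟩ := hv.extend (hvm ▸ hbz) (hvm ▸ Γ.opp_symm _ _ _ hzv)
  have hr := (hQ.isStraight_shift (t + 2) t).reverse
  have hstart : v' 0 = Q (t + 2 + (t - 0)) := by
    have hQ0 : Q (t + 2 + t) = Q 0 := by
      simpa only [zero_add, show 2 * (t + 1) = t + 2 + t by omega] using hQ.2.2 0
    simp only [Nat.sub_zero, hQ0, hQw 0 (by omega), hwp 0 (by omega), hv'v 0 (by omega), hv0]
  have hend : v' (s + 2) = Q (t + 2 + (t - t)) := by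
    simp only [Nat.sub_self, add_zero, hv'z, hQw (t + 2) (by omega), hwz]
  obtain ⟨rfl, hv'r⟩ :=
    Γ.vp2 t (by omega) (by omega) _ (s + 2) v' hr (by omega) hv' hstart hend
  have hb : Q (s + 3) = Q (s + 5) := by
    have := hv'r (s + 1) (by omega)
    rw [hv'v _ le_rfl, hvm, ← hwp _ le_rfl, ← hQw _ (by omega)] at this
    simpa [show s + 2 + 2 + (s + 2 - (s + 1)) = s + 5 by omega] using this
  exact hQ.ne_add_two (s + 3) hb

end VeldkampNGon

namespace GreenVQ

variable {V : Type*} (Γ : GreenVQ V)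

theorem mem_Pt_iff_even {s : ℕ} {p : ℕ → V} (hp : Γ.IsPath s p) (h0 : p 0 ∈ Γ.Pt) :
    ∀ i ≤ s, p i ∈ Γ.Pt ↔ Even i
  | 0, _ => by simpa using h0
  | i + 1, hi => by
    rw [Nat.even_add_one, ← mem_Pt_iff_even hp h0 i (by omega)]
    have := Γ.part _ _ (hp.1 i hi)
    tauto

theorem isStraight_two_of_isPath {p : ℕ → V} (hp : Γ.IsPath 2 p) (h0 : p 0 ∈ Γ.Pt) :
    Γ.IsStraight 2 p := by
  refine ⟨hp, fun i hi => ?_⟩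
  obtain rfl : i = 0 := by omega
  have h01 := hp.1 0 (by omega)
  exact Γ.green _ ((Γ.part _ _ h01).1 h0) _ _ (Γ.adj_symm _ _ h01) (hp.1 1 (by omega))
    (hp.2 0 le_rfl)

end GreenVQ

/-- In a green Veldkamp quadrangle, opposite points are at distance exactly 4. -/
theorem stmt8 {V : Type*} (Γ : GreenVQ V) (a b : V) (ha : a ∈ Γ.Pt) (hb : b ∈ Γ.Pt)
    (h : Γ.Opp a b) : Γ.DistEq a b 4 := by
  obtain ⟨p, hp, hp0, hp4⟩ := id h
  refine ⟨⟨p, hp.1, hp0, hp4⟩, fun j hj ⟨q, hq, hq0, hqj⟩ => ?_⟩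
  have hparity := Γ.mem_Pt_iff_even hq (hq0 ▸ ha) j le_rfl
  rw [hqj] at hparity
  interval_cases j
  · exact h.ne (hq0.symm.trans hqj)
  · exact absurd (hparity.1 hb) (by decide)
  · exact h.not_isStraight (Γ.isStraight_two_of_isPath hq (hq0 ▸ ha)) hq0 hqj one_le_two le_rfl
  · exact absurd (hparity.1 hb) (by decide)
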